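/- arXiv:math/0307129 — 7 statements merged into one kernel-verified Lean document; each statement's English description precedes it below -/
import Mathlib

section
/- Let μ₁, μ₂, μ₃, Γ₁, Γ₂, Γ₃, r, k be real numbers satisfying r² = μ₁μ₂μ₃(Γ₃ − Γ₂) and Γ₂ − Γ₁ = k²(Γ₂ − Γ₃). Let s : ℝ → ℝ be a differentiable function with s(0) = 0 and (s′(t))² = (1 − s(t)²)(1 − k² s(t)²) for all t ∈ ℝ. Then the function γ(t) := Γ₂ − (Γ₂ − Γ₁)·s(rt)² satisfies γ(0) = Γ₂ and, for all t ∈ ℝ, (γ′(t))² = 4 μ₁μ₂μ₃ (γ(t) − Γ₁)(γ(t) − Γ₂)(γ(t) − Γ₃). -/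
/-- The Jacobi sn-profile solves the cubic ODE for γ. -/
theorem stmt_0 (μ₁ μ₂ μ₃ Γ₁ Γ₂ Γ₃ r k : ℝ)
    (hr : r ^ 2 = μ₁ * μ₂ * μ₃ * (Γ₃ - Γ₂))
    (hk : Γ₂ - Γ₁ = k ^ 2 * (Γ₂ - Γ₃))
    (s : ℝ → ℝ) (hs : Differentiable ℝ s) (hs0 : s 0 = 0)
    (hode : ∀ t : ℝ, (deriv s t) ^ 2 = (1 - (s t) ^ 2) * (1 - k ^ 2 * (s t) ^ 2))
    (γ : ℝ → ℝ) (hγ : ∀ t : ℝ, γ t = Γ₂ - (Γ₂ - Γ₁) * (s (r * t)) ^ 2) :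
    γ 0 = Γ₂ ∧
      ∀ t : ℝ, (deriv γ t) ^ 2 =
        4 * (μ₁ * μ₂ * μ₃) * (γ t - Γ₁) * (γ t - Γ₂) * (γ t - Γ₃) := by
  have hγf : γ = fun t => Γ₂ - (Γ₂ - Γ₁) * (s (r * t)) ^ 2 := funext hγ
  subst hγf
  constructor
  · simp [hs0]
  · intro t
    have h1 : HasDerivAt (fun x : ℝ => r * x) r t := by
      simpa using (hasDerivAt_id t).const_mul r
    have h2 : HasDerivAt (fun x : ℝ => s (r * x)) (deriv s (r * t) * r) t :=
      (hs (r * t)).hasDerivAt.comp t h1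
    have h3 : HasDerivAt (fun x : ℝ => (s (r * x)) ^ 2)
        ((2 : ℕ) * (s (r * t)) ^ 1 * (deriv s (r * t) * r)) t := h2.pow 2
    have h4 : HasDerivAt (fun x : ℝ => Γ₂ - (Γ₂ - Γ₁) * (s (r * x)) ^ 2)
        (-((Γ₂ - Γ₁) * ((2 : ℕ) * (s (r * t)) ^ 1 * (deriv s (r * t) * r)))) t :=
      (h3.const_mul (Γ₂ - Γ₁)).const_sub Γ₂
    rw [h4.deriv]
    have hodet := hode (r * t)
    set S := s (r * t)
    set d := deriv s (r * t)
    push_cast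
    linear_combination (4 * (Γ₂ - Γ₁) ^ 2 * S ^ 2 * r ^ 2) * hodet +
      (4 * (Γ₂ - Γ₁) ^ 2 * S ^ 2 * (1 - S ^ 2) * (1 - k ^ 2 * S ^ 2)) * hr +
      (-4 * (μ₁ * μ₂ * μ₃) * (Γ₂ - Γ₁) ^ 2 * S ^ 4 * (1 - S ^ 2)) * hk
end

section
/- Let λ₁, λ₂, λ₃ be real numbers with λ₁ + λ₂ + λ₃ = 0, set μ₁ = λ₃ − λ₂, μ₂ = λ₁ − λ₃, μ₃ = λ₂ − λ₁, and let J ∈ ℝ. Suppose γ : ℝ → ℝ is differentiable and satisfies, for all t, (1/4)(γ′(t))² + J² = μ₁μ₂μ₃·γ(t)³ + (γ(t)²/3)·(μ₁μ₂ + μ₂μ₃ + μ₃μ₁) + 1/27. Then the function y(t) := −μ₁μ₂μ₃·γ(t) + (λ₁² + λ₂² + λ₃²)/3 satisfies, for all t, (y′(t))² + 4y(t)³ − 2y(t)²(λ₁² + λ₂² + λ₃²) = −4(λ₁²λ₂²λ₃² + J²μ₁²μ₂²μ₃²). -/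
/-! Since `y = -m γ + S / 3` with `m = μ₁μ₂μ₃` and `S = Σ lᵢ²`, we have `y' = -m γ'`; multiplying the
equation for `γ` by `4 m²` gives the equation for `y` once `l₃ = -(l₁ + l₂)` is substituted. -/

theorem conformal_factor_relation {l₁ l₂ l₃ μ₁ μ₂ μ₃ J g v : ℝ} (hl : l₁ + l₂ + l₃ = 0)
    (hμ₁ : μ₁ = l₃ - l₂) (hμ₂ : μ₂ = l₁ - l₃) (hμ₃ : μ₃ = l₂ - l₁)
    (h : (1 / 4) * v ^ 2 + J ^ 2 =
      μ₁ * μ₂ * μ₃ * g ^ 3 + (g ^ 2 / 3) * (μ₁ * μ₂ + μ₂ * μ₃ + μ₃ * μ₁) + 1 / 27) :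
    (-(μ₁ * μ₂ * μ₃) * v) ^ 2
        + 4 * (-(μ₁ * μ₂ * μ₃) * g + (l₁ ^ 2 + l₂ ^ 2 + l₃ ^ 2) / 3) ^ 3
        - 2 * (-(μ₁ * μ₂ * μ₃) * g + (l₁ ^ 2 + l₂ ^ 2 + l₃ ^ 2) / 3) ^ 2
          * (l₁ ^ 2 + l₂ ^ 2 + l₃ ^ 2) =
      -4 * (l₁ ^ 2 * l₂ ^ 2 * l₃ ^ 2 + J ^ 2 * (μ₁ ^ 2 * μ₂ ^ 2 * μ₃ ^ 2)) := by
  obtain rfl : l₃ = -(l₁ + l₂) := by linarith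
  subst hμ₁ hμ₂ hμ₃
  linear_combination 4 * ((-(l₁ + l₂) - l₂) * (l₁ - -(l₁ + l₂)) * (l₂ - l₁)) ^ 2 * h

theorem stmt_1_general (l₁ l₂ l₃ : ℝ) (hl : l₁ + l₂ + l₃ = 0)
    (μ₁ μ₂ μ₃ : ℝ) (hμ₁ : μ₁ = l₃ - l₂) (hμ₂ : μ₂ = l₁ - l₃) (hμ₃ : μ₃ = l₂ - l₁)
    (J : ℝ) (γ : ℝ → ℝ)
    (hode : ∀ t : ℝ, (1 / 4) * (deriv γ t) ^ 2 + J ^ 2 =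
      μ₁ * μ₂ * μ₃ * (γ t) ^ 3 + ((γ t) ^ 2 / 3) * (μ₁ * μ₂ + μ₂ * μ₃ + μ₃ * μ₁) + 1 / 27)
    (y : ℝ → ℝ) (hy : ∀ t : ℝ, y t = -(μ₁ * μ₂ * μ₃) * γ t + (l₁ ^ 2 + l₂ ^ 2 + l₃ ^ 2) / 3) :
    ∀ t : ℝ, (deriv y t) ^ 2 + 4 * (y t) ^ 3 - 2 * (y t) ^ 2 * (l₁ ^ 2 + l₂ ^ 2 + l₃ ^ 2) =
      -4 * (l₁ ^ 2 * l₂ ^ 2 * l₃ ^ 2 + J ^ 2 * (μ₁ ^ 2 * μ₂ ^ 2 * μ₃ ^ 2)) := by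
  intro t
  have hdy : deriv y t = -(μ₁ * μ₂ * μ₃) * deriv γ t := by
    rw [funext hy, deriv_add_const, deriv_const_mul_field']
  rw [hdy, hy t]
  exact conformal_factor_relation hl hμ₁ hμ₂ hμ₃ (hode t)

/-- The conformal factor y satisfies the cubic ODE derived from the ODE for γ. -/
theorem stmt_1 (l₁ l₂ l₃ : ℝ) (hl : l₁ + l₂ + l₃ = 0)
    (μ₁ μ₂ μ₃ : ℝ) (hμ₁ : μ₁ = l₃ - l₂) (hμ₂ : μ₂ = l₁ - l₃) (hμ₃ : μ₃ = l₂ - l₁)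
    (J : ℝ) (γ : ℝ → ℝ) (hγ : Differentiable ℝ γ)
    (hode : ∀ t : ℝ, (1 / 4) * (deriv γ t) ^ 2 + J ^ 2 =
      μ₁ * μ₂ * μ₃ * (γ t) ^ 3 + ((γ t) ^ 2 / 3) * (μ₁ * μ₂ + μ₂ * μ₃ + μ₃ * μ₁) + 1 / 27)
    (y : ℝ → ℝ) (hy : ∀ t : ℝ, y t = -(μ₁ * μ₂ * μ₃) * γ t + (l₁ ^ 2 + l₂ ^ 2 + l₃ ^ 2) / 3) :
    ∀ t : ℝ, (deriv y t) ^ 2 + 4 * (y t) ^ 3 - 2 * (y t) ^ 2 * (l₁ ^ 2 + l₂ ^ 2 + l₃ ^ 2) =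
      -4 * (l₁ ^ 2 * l₂ ^ 2 * l₃ ^ 2 + J ^ 2 * (μ₁ ^ 2 * μ₂ ^ 2 * μ₃ ^ 2)) :=
  stmt_1_general l₁ l₂ l₃ hl μ₁ μ₂ μ₃ hμ₁ hμ₂ hμ₃ J γ hode y hy
end

section
/- Let y₁, y₂, y₃ be real numbers with y₂ ≤ 0 ≤ y₁ ≤ y₃ and y₂ < y₃. Set r = √(y₃ − y₂) and k = √((y₃ − y₁)/(y₃ − y₂)), and assume k ∈ (0,1). Let K = ∫₀^{π/2} (1 − k² sin²x)^{−1/2} dx and E = ∫₀^{π/2} (1 − k² sin²x)^{1/2} dx. Let s : ℝ → ℝ be differentiable with s(0) = 0, s(K) = 1, s(2K − t) = s(t) for all t ∈ ℝ, and s′(t) = √((1 − s(t)²)(1 − k² s(t)²)) for all t ∈ [0,K]. Then ∫₀^{2K/r} ( y₃ − (y₃ − y₁)·s(rt)² ) dt = 2( y₂·K/r + r·E ). -/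
/-! The substitution `x = arcsin (s t)` turns `dt` into `(1 - k² sin² x)^{-1/2} dx`, because
`s' = √((1 - s²)(1 - k² s²))`. Integrating `dt` up to the first time `s` reaches `1` therefore
gives `K`, so that time is `K`, and `(1 - k² s²) dt` becomes `√(1 - k² sin² x) dx`, giving `E`.
The symmetry `s(2K - t) = s t` doubles this to the period `[0, 2K]`, and the conformal factor is
`y₂ + r² (1 - k² s²)`. -/

open Real Set intervalIntegral MeasureTheory

lemma one_sub_sq_mul_sq_pos {k u : ℝ} (hk : k ^ 2 < 1) (hu : u ^ 2 ≤ 1) :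
    0 < 1 - k ^ 2 * u ^ 2 := by
  nlinarith

lemma ContinuousOn.exists_first_mem_Icc_eq {f : ℝ → ℝ} {a b c : ℝ} (hab : a ≤ b)
    (hf : ContinuousOn f (Icc a b)) (hb : f b = c) :
    ∃ t₀ ∈ Icc a b, f t₀ = c ∧ ∀ t ∈ Ico a t₀, f t ≠ c := by
  have hclosed : IsClosed (Icc a b ∩ f ⁻¹' {c}) :=
    hf.preimage_isClosed_of_isClosed isClosed_Icc isClosed_singleton
  obtain ⟨t₀, ⟨ht₀, hft₀⟩, hleast⟩ := (isCompact_Icc.of_isClosed_subset hclosed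
    inter_subset_left).exists_isLeast ⟨b, right_mem_Icc.2 hab, hb⟩
  refine ⟨t₀, ht₀, hft₀, fun t ht hft => ?_⟩
  exact (hleast ⟨⟨ht.1, ht.2.le.trans ht₀.2⟩, hft⟩).not_gt ht.2

lemma integral_zero_two_mul_eq_two_mul_of_symm {f : ℝ → ℝ} {a : ℝ}
    (hf : ∀ t, f (2 * a - t) = f t) (hint : IntervalIntegrable f volume 0 a) :
    ∫ t in 0..2 * a, f t = 2 * ∫ t in 0..a, f t := by
  have htwo : 2 * a - a = a := by ring
  have hreflect := integral_comp_sub_left (a := 0) (b := a) f (2 * a)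
  simp only [hf, htwo, sub_zero] at hreflect
  have hint' := (hint.comp_sub_left (2 * a)).symm
  simp only [hf, htwo, sub_zero] at hint'
  rw [← integral_add_adjacent_intervals hint hint', ← hreflect, two_mul]

noncomputable def ellipticK (k : ℝ) : ℝ := ∫ x in 0..π / 2, (√(1 - k ^ 2 * sin x ^ 2))⁻¹

noncomputable def ellipticE (k : ℝ) : ℝ := ∫ x in 0..π / 2, √(1 - k ^ 2 * sin x ^ 2)

section SnODE

variable {k : ℝ} {s : ℝ → ℝ} {a b : ℝ}

lemma continuousOn_of_sn_ode
    (hs : ∀ t ∈ Icc a b, HasDerivAt s (√((1 - s t ^ 2) * (1 - k ^ 2 * s t ^ 2))) t) :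
    ContinuousOn s (Icc a b) :=
  continuousOn_of_forall_continuousAt fun t ht => (hs t ht).continuousAt

lemma monotoneOn_of_sn_ode
    (hs : ∀ t ∈ Icc a b, HasDerivAt s (√((1 - s t ^ 2) * (1 - k ^ 2 * s t ^ 2))) t) :
    MonotoneOn s (Icc a b) :=
  monotoneOn_of_hasDerivWithinAt_nonneg (convex_Icc a b) (continuousOn_of_sn_ode hs)
    (fun t ht => (hs t (interior_subset ht)).hasDerivWithinAt) fun _ _ => sqrt_nonneg _

lemma hasDerivAt_arcsin_comp_of_sn_ode {t : ℝ}
    (hst : HasDerivAt s (√((1 - s t ^ 2) * (1 - k ^ 2 * s t ^ 2))) t) (h : s t ∈ Ioo (-1) 1) :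
    HasDerivAt (fun t => arcsin (s t)) (√(1 - k ^ 2 * s t ^ 2)) t := by
  have hpos : 0 < 1 - s t ^ 2 := by nlinarith [h.1, h.2]
  refine ((hasDerivAt_arcsin h.1.ne' h.2.ne).comp t hst).congr_deriv ?_
  rw [sqrt_mul hpos.le]
  field_simp

theorem integral_mul_comp_arcsin_of_sn_ode (hab : a ≤ b)
    (hs : ∀ t ∈ Icc a b, HasDerivAt s (√((1 - s t ^ 2) * (1 - k ^ 2 * s t ^ 2))) t)
    (hs_mem : ∀ t ∈ Ioo a b, s t ∈ Ioo (-1) 1) {g : ℝ → ℝ} (hg : Continuous g) :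
    ∫ t in a..b, g (arcsin (s t)) * √(1 - k ^ 2 * s t ^ 2) =
      ∫ x in arcsin (s a)..arcsin (s b), g x := by
  have hcont := continuousOn_of_sn_ode hs
  refine integral_comp_mul_deriv'' (f := fun t => arcsin (s t)) ?_ ?_ ?_ hg.continuousOn
  · rw [uIcc_of_le hab]
    exact continuous_arcsin.comp_continuousOn hcont
  · rw [min_eq_left hab, max_eq_right hab]
    exact fun t ht => (hasDerivAt_arcsin_comp_of_sn_ode (hs t (Ioo_subset_Icc_self ht))
      (hs_mem t ht)).hasDerivWithinAt
  · rw [uIcc_of_le hab]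
    exact (continuousOn_const.sub (continuousOn_const.mul (hcont.pow 2))).sqrt

theorem ellipticK_eq_and_ellipticE_eq_of_sn_ode {T : ℝ} (hk : k ^ 2 < 1) (hT : 0 ≤ T)
    (hs : ∀ t ∈ Icc 0 T, HasDerivAt s (√((1 - s t ^ 2) * (1 - k ^ 2 * s t ^ 2))) t)
    (hs0 : s 0 = 0) (hsT : s T = 1) :
    ∃ t₀ ∈ Icc 0 T, ellipticK k = t₀ ∧ ellipticE k = ∫ t in 0..t₀, (1 - k ^ 2 * s t ^ 2) := by
  -- `arcsin ∘ s` is differentiable only while `s < 1`, so substitute up to the first time `s = 1`.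
  obtain ⟨t₀, ht₀, hst₀, hfirst⟩ :=
    (continuousOn_of_sn_ode hs).exists_first_mem_Icc_eq hT hsT
  have hsub : Icc 0 t₀ ⊆ Icc 0 T := Icc_subset_Icc_right ht₀.2
  have hmem : ∀ t ∈ Icc 0 t₀, s t ∈ Icc 0 1 := by
    intro t ht
    rw [← hs0, ← hst₀]
    exact (monotoneOn_of_sn_ode fun t ht => hs t (hsub ht)).mapsTo_Icc ht
  have hmem_Ioo : ∀ t ∈ Ioo 0 t₀, s t ∈ Ioo (-1) 1 := fun t ht =>
    ⟨by linarith [(hmem t (Ioo_subset_Icc_self ht)).1],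
      (hmem t (Ioo_subset_Icc_self ht)).2.lt_of_ne (hfirst t ⟨ht.1.le, ht.2⟩)⟩
  have hsubst : ∀ g : ℝ → ℝ, Continuous g →
      ∫ t in 0..t₀, g (arcsin (s t)) * √(1 - k ^ 2 * s t ^ 2) = ∫ x in 0..π / 2, g x := by
    intro g hg
    rw [integral_mul_comp_arcsin_of_sn_ode ht₀.1 (fun t ht => hs t (hsub ht)) hmem_Ioo hg,
      hs0, hst₀, arcsin_zero, arcsin_one]
  have hsin : ∀ t ∈ uIcc 0 t₀, sin (arcsin (s t)) = s t := by
    intro t ht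
    rw [uIcc_of_le ht₀.1] at ht
    exact sin_arcsin (by linarith [(hmem t ht).1]) (hmem t ht).2
  have hpos : ∀ t ∈ uIcc 0 t₀, 0 < 1 - k ^ 2 * s t ^ 2 := fun t ht =>
    one_sub_sq_mul_sq_pos hk (hsin t ht ▸ sin_sq_le_one _)
  have hcont : Continuous fun x => √(1 - k ^ 2 * sin x ^ 2) := by fun_prop
  have hcont_inv : Continuous fun x => (√(1 - k ^ 2 * sin x ^ 2))⁻¹ :=
    hcont.inv₀ fun x => (sqrt_pos.2 (one_sub_sq_mul_sq_pos hk (sin_sq_le_one x))).ne'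
  refine ⟨t₀, ht₀, ?_, ?_⟩
  · rw [ellipticK, ← hsubst _ hcont_inv, integral_congr (g := fun _ => 1)]
    · simp
    · intro t ht
      dsimp only
      rw [hsin t ht, inv_mul_cancel₀ (sqrt_pos.2 (hpos t ht)).ne']
  · rw [ellipticE, ← hsubst _ hcont]
    refine integral_congr fun t ht => ?_
    rw [hsin t ht, mul_self_sqrt (hpos t ht).le]

end SnODE

/-- the integral of the conformal factor over one period equals
`2(y₂K/r + rE)`. -/
theorem stmt_3 (y₁ y₂ y₃ : ℝ) (hy : y₂ ≤ 0 ∧ 0 ≤ y₁ ∧ y₁ ≤ y₃) (hy23 : y₂ < y₃)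
    (r k : ℝ) (hr : r = Real.sqrt (y₃ - y₂)) (hkdef : k = Real.sqrt ((y₃ - y₁) / (y₃ - y₂)))
    (hk : k ∈ Set.Ioo (0 : ℝ) 1) (K E : ℝ)
    (hK : K = ∫ x in (0 : ℝ)..(π / 2), (Real.sqrt (1 - k ^ 2 * Real.sin x ^ 2))⁻¹)
    (hE : E = ∫ x in (0 : ℝ)..(π / 2), Real.sqrt (1 - k ^ 2 * Real.sin x ^ 2))
    (s : ℝ → ℝ) (hs0 : s 0 = 0) (hsK : s K = 1)
    (hsym : ∀ t : ℝ, s (2 * K - t) = s t)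
    (hs : ∀ t ∈ Set.Icc (0 : ℝ) K,
      HasDerivAt s (Real.sqrt ((1 - (s t) ^ 2) * (1 - k ^ 2 * (s t) ^ 2))) t) :
    ∫ t in (0 : ℝ)..(2 * K / r), (y₃ - (y₃ - y₁) * (s (r * t)) ^ 2) =
      2 * (y₂ * K / r + r * E) := by
  obtain ⟨-, -, hy13⟩ := hy
  have hk2 : k ^ 2 < 1 := by nlinarith [hk.1, hk.2]
  have hK0 : 0 ≤ K := hK ▸ integral_nonneg (by positivity) fun x _ => by positivity
  obtain ⟨t₀, -, hKt₀, hEt₀⟩ := ellipticK_eq_and_ellipticE_eq_of_sn_ode hk2 hK0 hs hs0 hsK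
  have hEK : E = ∫ t in 0..K, (1 - k ^ 2 * s t ^ 2) := by
    rw [hK.trans hKt₀]
    exact hE.trans hEt₀
  have hr0 : r ≠ 0 := by rw [hr]; exact (sqrt_pos.2 (by linarith)).ne'
  have hr2 : r ^ 2 = y₃ - y₂ := by rw [hr, sq_sqrt (by linarith)]
  have hkr : k ^ 2 * r ^ 2 = y₃ - y₁ := by
    rw [hkdef, hr2, sq_sqrt (div_nonneg (by linarith) (by linarith)),
      div_mul_cancel₀ _ (by linarith)]
  have hfactor : ∀ u, y₃ - (y₃ - y₁) * s u ^ 2 = y₂ + r ^ 2 * (1 - k ^ 2 * s u ^ 2) :=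
    fun u => by linear_combination s u ^ 2 * hkr - hr2
  have hint : IntervalIntegrable (fun u => 1 - k ^ 2 * s u ^ 2) volume 0 K :=
    ((continuousOn_const.sub (continuousOn_const.mul ((continuousOn_of_sn_ode hs).pow 2))).mono
      (uIcc_of_le hK0).subset).intervalIntegrable
  calc ∫ t in 0..2 * K / r, (y₃ - (y₃ - y₁) * s (r * t) ^ 2)
      = r⁻¹ * ∫ u in 0..2 * K, (y₂ + r ^ 2 * (1 - k ^ 2 * s u ^ 2)) := by
        simp only [hfactor]
        rw [integral_comp_mul_left (fun u => y₂ + r ^ 2 * (1 - k ^ 2 * s u ^ 2)) hr0, mul_zero,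
          mul_div_cancel₀ _ hr0, smul_eq_mul]
    _ = r⁻¹ * (2 * (y₂ * K + r ^ 2 * E)) := by
        rw [integral_zero_two_mul_eq_two_mul_of_symm (fun t => by rw [hsym])
          (intervalIntegrable_const.add (hint.const_mul _)), integral_add intervalIntegrable_const
          (hint.const_mul _), intervalIntegral.integral_const_mul, ← hEK,
          intervalIntegral.integral_const, smul_eq_mul, sub_zero, mul_comm K]
    _ = 2 * (y₂ * K / r + r * E) := by field_simp
end

section
/- Let n ≥ 3 be an integer. For every nonzero k = (k₁, …, k_{n−1}) ∈ ℤ^{n−1}, one has n·(k₁² + ⋯ + k_{n−1}²) − (k₁ + ⋯ + k_{n−1})² ≥ n − 1. Moreover, the set of k ∈ ℤ^{n−1} for which equality holds has exactly 2n elements. -/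
/-!
Pick a coordinate `p` with `kₚ ≠ 0` and let `S` be the other `n - 2` coordinates. Then
`Q_n(k) - (n - 1) = (kₚ² - 1) + ∑_{j ∈ S} (kⱼ² + (kₚ - kⱼ)² - 1) + (|S| ∑_S kⱼ² - (∑_S kⱼ)²)`,
and every term is nonnegative: `kⱼ` cannot equal both `0` and `kₚ`, and the last term is
`½ ∑_{i,j ∈ S} (kᵢ - kⱼ)²`. Equality forces `kₚ = ±1`, `kⱼ ∈ {0, kₚ}` and `k` constant on `S`,
which leaves the `2(n - 1)` vectors `±eₚ` and the two constant vectors `±(1, …, 1)`.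
-/

open Finset

theorem Finset.sum_sum_sub_sq {ι : Type*} (s : Finset ι) (f : ι → ℤ) :
    ∑ i ∈ s, ∑ j ∈ s, (f i - f j) ^ 2 = 2 * (#s * ∑ i ∈ s, f i ^ 2 - (∑ i ∈ s, f i) ^ 2) := by
  simp only [sub_sq, sum_add_distrib, sum_sub_distrib, sum_const, nsmul_eq_mul, ← sum_mul,
    ← mul_sum]
  ring

theorem Finset.eq_of_card_mul_sum_sq_sub_sq_sum_eq_zero {ι : Type*} {s : Finset ι} {f : ι → ℤ}
    (h : #s * ∑ i ∈ s, f i ^ 2 - (∑ i ∈ s, f i) ^ 2 = 0) {i j : ι} (hi : i ∈ s) (hj : j ∈ s) :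
    f i = f j := by
  have hsum : ∑ i ∈ s, ∑ j ∈ s, (f i - f j) ^ 2 = 0 := by rw [sum_sum_sub_sq, h, mul_zero]
  have hrow := (sum_eq_zero_iff_of_nonneg fun i _ ↦ sum_nonneg fun j _ ↦ sq_nonneg _).mp hsum i hi
  have hij := (sum_eq_zero_iff_of_nonneg fun j _ ↦ sq_nonneg _).mp hrow j hj
  exact sub_eq_zero.mp (pow_eq_zero_iff two_ne_zero |>.mp hij)

theorem Int.one_le_sq_add_sub_sq {a : ℤ} (ha : a ≠ 0) (t : ℤ) : 1 ≤ t ^ 2 + (a - t) ^ 2 := by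
  rcases eq_or_ne t 0 with rfl | ht
  · linarith [sq_pos_iff.mpr ha]
  · linarith [sq_pos_iff.mpr ht, sq_nonneg (a - t)]

theorem Int.eq_zero_or_eq_of_sq_add_sub_sq_eq_one {a t : ℤ} (h : t ^ 2 + (a - t) ^ 2 = 1) :
    t = 0 ∨ t = a := by
  by_contra! hne
  linarith [sq_pos_iff.mpr hne.1, sq_pos_iff.mpr (sub_ne_zero.mpr hne.2.symm)]

section Minimizer

variable {ι : Type*} [DecidableEq ι]

def cliffordMinimizer : Option ι × ℤˣ → ι → ℤ
  | (none, u) => fun _ ↦ u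
  | (some i, u) => Pi.single i u

theorem cliffordMinimizer_injective [Nontrivial ι] :
    Function.Injective (cliffordMinimizer (ι := ι)) := by
  rintro ⟨_ | i, u⟩ ⟨_ | j, v⟩ h
  · obtain ⟨i⟩ : Nonempty ι := inferInstance
    simpa [cliffordMinimizer, Units.ext_iff] using congrFun h i
  · obtain ⟨i, hi⟩ := exists_ne j
    simpa [cliffordMinimizer, hi] using congrFun h i
  · obtain ⟨j, hj⟩ := exists_ne i
    simpa [cliffordMinimizer, hj] using (congrFun h j).symm
  · have hi := congrFun h i
    rcases eq_or_ne i j with rfl | hij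
    · simpa [cliffordMinimizer, Units.ext_iff] using hi
    · simp [cliffordMinimizer, hij] at hi

end Minimizer

section Form

variable {ι : Type*} [Fintype ι]

/-- The form `Q_n` of the statement, on `ℤ^ι` with `n = card ι + 1`. -/
def cliffordForm (k : ι → ℤ) : ℤ :=
  ((Fintype.card ι : ℤ) + 1) * ∑ i, k i ^ 2 - (∑ i, k i) ^ 2

variable [DecidableEq ι]

theorem cliffordForm_sub_card_eq (k : ι → ℤ) (p : ι) :
    cliffordForm k - Fintype.card ι = (k p ^ 2 - 1)
      + ∑ j ∈ univ.erase p, (k j ^ 2 + (k p - k j) ^ 2 - 1)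
      + (#(univ.erase p) * ∑ j ∈ univ.erase p, k j ^ 2 - (∑ j ∈ univ.erase p, k j) ^ 2) := by
  have hcard : (Fintype.card ι : ℤ) = #(univ.erase p) + 1 := by
    exact_mod_cast (card_erase_add_one (mem_univ p)).symm
  rw [cliffordForm, hcard, ← add_sum_erase univ _ (mem_univ p),
    ← add_sum_erase univ k (mem_univ p)]
  simp only [sub_sq, sum_add_distrib, sum_sub_distrib, sum_const, nsmul_eq_mul, ← mul_sum]
  ring

theorem card_le_cliffordForm {k : ι → ℤ} (hk : k ≠ 0) : (Fintype.card ι : ℤ) ≤ cliffordForm k := by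
  obtain ⟨p, hp⟩ := Function.ne_iff.mp hk
  have hpivot := cliffordForm_sub_card_eq k p
  have hbrackets := sum_nonneg fun j (_ : j ∈ univ.erase p) ↦
    sub_nonneg.mpr (Int.one_le_sq_add_sub_sq hp (k j))
  linarith [sq_sum_le_card_mul_sum_sq (s := univ.erase p) (f := k), sq_pos_iff.mpr hp]

theorem exists_cliffordMinimizer_eq {k : ι → ℤ} (hk : k ≠ 0)
    (h : cliffordForm k = Fintype.card ι) : ∃ x, cliffordMinimizer x = k := by
  obtain ⟨p, hp⟩ := Function.ne_iff.mp hk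
  set S := univ.erase p
  have hpivot := cliffordForm_sub_card_eq k p
  have hbrackets_nonneg : ∀ j ∈ S, 0 ≤ k j ^ 2 + (k p - k j) ^ 2 - 1 := fun j _ ↦
    sub_nonneg.mpr (Int.one_le_sq_add_sub_sq hp (k j))
  have hsum_nonneg := sum_nonneg hbrackets_nonneg
  have hvar_nonneg := sq_sum_le_card_mul_sum_sq (s := S) (f := k)
  have hp_sq := sq_pos_iff.mpr hp
  have hunit : k p ^ 2 = 1 := by linarith
  have hvar : #S * ∑ j ∈ S, k j ^ 2 - (∑ j ∈ S, k j) ^ 2 = 0 := by linarith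
  have hbrackets := (sum_eq_zero_iff_of_nonneg hbrackets_nonneg).mp (by linarith)
  have hdichotomy : ∀ j ∈ S, k j = 0 ∨ k j = k p := fun j hj ↦
    Int.eq_zero_or_eq_of_sq_add_sub_sq_eq_one (sub_eq_zero.mp (hbrackets j hj))
  obtain ⟨u, hu⟩ := IsUnit.of_pow_eq_one hunit two_ne_zero
  by_cases hzero : ∀ j ∈ S, k j = 0
  · refine ⟨(some p, u), funext fun j ↦ ?_⟩
    rcases eq_or_ne j p with rfl | hj
    · simp [cliffordMinimizer, hu]
    · simp [cliffordMinimizer, hj, hzero j (mem_erase_of_ne_of_mem hj (mem_univ j))]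
  · push Not at hzero
    obtain ⟨j₀, hj₀, hkj₀⟩ := hzero
    refine ⟨(none, u), funext fun j ↦ ?_⟩
    rcases eq_or_ne j p with rfl | hj
    · simp [cliffordMinimizer, hu]
    · rw [eq_of_card_mul_sum_sq_sub_sq_sum_eq_zero hvar (mem_erase_of_ne_of_mem hj (mem_univ j))
        hj₀, (hdichotomy j₀ hj₀).resolve_left hkj₀]
      simp [cliffordMinimizer, hu]

theorem cliffordForm_cliffordMinimizer (x : Option ι × ℤˣ) :
    cliffordForm (cliffordMinimizer x) = Fintype.card ι := by
  rcases x with ⟨_ | i, u⟩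
  · simp only [cliffordForm, cliffordMinimizer, sum_const, card_univ, nsmul_eq_mul]
    linear_combination (Fintype.card ι : ℤ) * Int.isUnit_sq u.isUnit
  · simp [cliffordForm, cliffordMinimizer, Pi.single_apply, Int.isUnit_sq u.isUnit]

theorem setOf_cliffordForm_eq_card [Nonempty ι] :
    {k : ι → ℤ | cliffordForm k = Fintype.card ι} = Set.range cliffordMinimizer := by
  ext k
  refine ⟨fun h ↦ exists_cliffordMinimizer_eq ?_ h, ?_⟩
  · rintro rfl
    have := Fintype.card_pos (α := ι)
    simp [cliffordForm] at h
    omega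
  · rintro ⟨x, rfl⟩
    exact cliffordForm_cliffordMinimizer x

theorem ncard_setOf_cliffordForm_eq_card [Nontrivial ι] :
    {k : ι → ℤ | cliffordForm k = Fintype.card ι}.ncard = 2 * (Fintype.card ι + 1) := by
  rw [setOf_cliffordForm_eq_card, Set.ncard_range_of_injective cliffordMinimizer_injective]
  simp [Nat.card_eq_fintype_card, Fintype.card_units_int, mul_comm]

end Form

/-- for `n ≥ 3`, the quadratic form `Q_n(k) = n·Σkᵢ² − (Σkᵢ)²` on `ℤ^{n−1}`
is `≥ n − 1` on nonzero vectors, with equality attained on exactly `2n` vectors. -/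
theorem stmt_7 (n : ℕ) (hn : 3 ≤ n) :
    (∀ k : Fin (n - 1) → ℤ, k ≠ 0 →
      (n : ℤ) * (∑ i, (k i) ^ 2) - (∑ i, k i) ^ 2 ≥ (n : ℤ) - 1) ∧
    {k : Fin (n - 1) → ℤ |
      (n : ℤ) * (∑ i, (k i) ^ 2) - (∑ i, k i) ^ 2 = (n : ℤ) - 1}.ncard = 2 * n := by
  have hcard : (Fintype.card (Fin (n - 1)) : ℤ) = n - 1 := by simp; omega
  have hform (k : Fin (n - 1) → ℤ) : cliffordForm k = n * ∑ i, k i ^ 2 - (∑ i, k i) ^ 2 := by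
    rw [cliffordForm, hcard, sub_add_cancel]
  have : Nontrivial (Fin (n - 1)) := Fin.nontrivial_iff_two_le.mpr (by omega)
  simp_rw [← hform, ← hcard]
  refine ⟨fun k hk ↦ card_le_cliffordForm hk, ?_⟩
  rw [ncard_setOf_cliffordForm_eq_card, Fintype.card_fin]
  omega
end

section
/- For every integer n ≥ 3 with n ≠ 8 and n ≠ 9, the set of k = (k₁, …, k_{n−1}) ∈ ℤ^{n−1} with n·(k₁² + ⋯ + k_{n−1}²) − (k₁ + ⋯ + k_{n−1})² = 2n has exactly n(n−1) elements; for n = 8 and for n = 9 this set has strictly more than n(n−1) elements. -/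
/-!
Since `2 Q(K) = ∑ᵢ ∑ⱼ (Kᵢ - Kⱼ)²`, the form `Q` is invariant under adding constant vectors.
If `Q(K) = 2n`, summing `(K_a - K_b)² ≤ 2 (Kᵢ - K_a)² + 2 (Kᵢ - K_b)²` over `i` gives
`|K_a - K_b| ≤ 2`, so `K` takes only the values `m, m + 1, m + 2` (with `m` its minimum), with
multiplicities `p ≥ 1, q, r`, and `Q(K) = 2n` becomes `pq + qr + 4pr = 2(p + q + r)`. Either
`p = r = 1`, i.e. `K` is a root `e_a - e_b` up to a constant, or `r = 0` and `p + q ∈ {8, 9}`.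
The `n(n - 1)` roots give distinct solutions in `ℤ^{n-1}` after moving their last coordinate
to `0`, and for `n = 8, 9` the two-valued vectors are further solutions.
-/

open Finset Function

namespace CliffordTorus

theorem value_counts_cases {p q r : ℕ} (hp : 0 < p)
    (h : p * q + q * r + 4 * p * r = 2 * (p + q + r)) :
    p = 1 ∧ r = 1 ∨ r = 0 ∧ (p + q = 8 ∨ p + q = 9) := by
  rcases Nat.eq_zero_or_pos r with rfl | hr
  · right
    have hpq : ((p : ℤ) - 2) * ((q : ℤ) - 2) = 4 := by
      have : (p * q : ℤ) = 2 * (p + q) := by exact_mod_cast (by simpa using h)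
      linear_combination this
    have hp4 : (p : ℤ) - 2 ≤ 4 := Int.le_of_dvd (by norm_num) (Dvd.intro _ hpq)
    have hq4 : (q : ℤ) - 2 ≤ 4 := Int.le_of_dvd (by norm_num) (Dvd.intro_left _ hpq)
    have hp6 : p ≤ 6 := by omega
    have hq6 : q ≤ 6 := by omega
    interval_cases p <;> interval_cases q <;> omega
  · left
    constructor <;> nlinarith

section Form

variable {ι : Type*} [Fintype ι]

/-- The paper's `Q_n(k)` is `Q (Fin.snoc k 0)` on `Fin n`, see `Q_snoc_zero`. -/
def Q (K : ι → ℤ) : ℤ := Fintype.card ι * ∑ i, K i ^ 2 - (∑ i, K i) ^ 2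

theorem two_mul_Q (K : ι → ℤ) : 2 * Q K = ∑ i, ∑ j, (K i - K j) ^ 2 := by
  simp only [Q, sub_sq, sum_add_distrib, sum_sub_distrib, sum_const, card_univ, nsmul_eq_mul,
    ← mul_sum, ← sum_mul, mul_assoc]
  ring

theorem Q_add_const (K : ι → ℤ) (c : ℤ) : Q (K + const ι c) = Q K := by
  have h := two_mul_Q (K + const ι c)
  simp only [Pi.add_apply, const_apply, add_sub_add_right_eq_sub, ← two_mul_Q K] at h
  omega

theorem card_mul_sq_sub_le (K : ι → ℤ) (a b : ι) :
    Fintype.card ι * (K a - K b) ^ 2 ≤ 4 * Q K := by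
  classical
  set S : ι → ℤ := fun j => ∑ i, (K i - K j) ^ 2
  have hS : ∀ j, 0 ≤ S j := fun j => sum_nonneg fun i _ => sq_nonneg _
  have hsum : ∑ j, S j = 2 * Q K := by rw [two_mul_Q, sum_comm]
  rcases eq_or_ne a b with rfl | hab
  · simp only [sub_self, zero_pow two_ne_zero, mul_zero]
    linarith [sum_nonneg fun j (_ : j ∈ univ) => hS j]
  have hab' : S a + S b ≤ 2 * Q K := by
    rw [← hsum, ← sum_pair hab]
    exact sum_le_sum_of_subset_of_nonneg (subset_univ _) fun j _ _ => hS j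
  calc Fintype.card ι * (K a - K b) ^ 2 = ∑ _i : ι, (K a - K b) ^ 2 := by simp
    _ ≤ ∑ i, (2 * (K i - K a) ^ 2 + 2 * (K i - K b) ^ 2) :=
        sum_le_sum fun i _ => by nlinarith [sq_nonneg (2 * K i - K a - K b)]
    _ = 2 * (S a + S b) := by simp only [S, sum_add_distrib, ← mul_sum]; ring
    _ ≤ 4 * Q K := by linarith

theorem sub_le_two_of_Q_eq {K : ι → ℤ} (hK : Q K = 2 * Fintype.card ι) (a b : ι) :
    K a - K b ≤ 2 := by
  have hn : (0 : ℤ) < Fintype.card ι := by have := Fintype.card_pos_iff.2 ⟨a⟩; omega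
  have h := card_mul_sq_sub_le K a b
  rw [hK] at h
  have : (K a - K b) ^ 2 ≤ 8 := le_of_mul_le_mul_left (by linarith) hn
  nlinarith

theorem card_eq_card_add_card_add_card {K : ι → ℤ} {m : ℤ}
    (hK : ∀ i, K i = m ∨ K i = m + 1 ∨ K i = m + 2) :
    Fintype.card ι = #{i | K i = m} + #{i | K i = m + 1} + #{i | K i = m + 2} := by
  have h : ∀ i, (if K i = m then 1 else 0) + (if K i = m + 1 then 1 else 0) +
      (if K i = m + 2 then 1 else 0) = 1 := fun i => by
    rcases hK i with h | h | h <;> simp [h]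
  simpa only [sum_add_distrib, sum_boole, Nat.cast_id, sum_const, card_univ, smul_eq_mul,
    mul_one] using (sum_congr rfl fun i (_ : i ∈ univ) => h i).symm

theorem Q_eq_of_forall_eq_or {K : ι → ℤ} {m : ℤ}
    (hK : ∀ i, K i = m ∨ K i = m + 1 ∨ K i = m + 2) :
    Q K = #{i | K i = m} * #{i | K i = m + 1} + #{i | K i = m + 1} * #{i | K i = m + 2} +
      4 * #{i | K i = m} * #{i | K i = m + 2} := by
  have hsum : ∑ i, (K i - m) = #{i | K i = m + 1} + 2 * #{i | K i = m + 2} := by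
    rw [← sum_boole, ← sum_boole, mul_sum, ← sum_add_distrib]
    refine sum_congr rfl fun i _ => ?_
    rcases hK i with h | h | h <;> simp [h]
  have hsq : ∑ i, (K i - m) ^ 2 = #{i | K i = m + 1} + 4 * #{i | K i = m + 2} := by
    rw [← sum_boole, ← sum_boole, mul_sum, ← sum_add_distrib]
    refine sum_congr rfl fun i _ => ?_
    rcases hK i with h | h | h <;> simp [h]
  rw [← Q_add_const K (-m), Q]
  simp only [Pi.add_apply, const_apply, ← sub_eq_add_neg, hsum, hsq,
    card_eq_card_add_card_add_card hK]
  push_cast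
  ring

end Form

section Roots

variable {ι : Type*} [DecidableEq ι]

/-- The roots `e_a - e_b` of `SU(n)`; there are `n(n - 1) = dim SU(n) - dim T^{n-1}` of them. -/
def root (a b : ι) : ι → ℤ := Pi.single a 1 - Pi.single b 1

theorem root_inj {a b a' b' : ι} (hab : a ≠ b) (h : root a b = root a' b') :
    a = a' ∧ b = b' := by
  have ha := congrFun h a
  have hb := congrFun h b
  simp only [root, Pi.sub_apply, Pi.single_apply, if_neg hab, if_neg (Ne.symm hab)] at ha hb
  split_ifs at ha hb <;> first | omega | exact ⟨‹_›, ‹_›⟩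

variable [Fintype ι]

theorem sum_root (a b : ι) : ∑ i, root a b i = 0 := by
  simp [root, sum_sub_distrib]

theorem Q_root_add_const {a b : ι} (hab : a ≠ b) (c : ℤ) :
    Q (root a b + const ι c) = 2 * Fintype.card ι := by
  have hsq : ∀ i, root a b i ^ 2 = (Pi.single a 1 + Pi.single b 1 : ι → ℤ) i := fun i => by
    by_cases ha : i = a <;> by_cases hb : i = b <;> simp_all [root]
  rw [Q_add_const, Q, sum_root]
  simp [hsq, sum_add_distrib]
  ring

theorem exists_eq_root_add_const [Nonempty ι] {K : ι → ℤ} (hK : Q K = 2 * Fintype.card ι)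
    (h8 : Fintype.card ι ≠ 8) (h9 : Fintype.card ι ≠ 9) :
    ∃ a b, a ≠ b ∧ ∃ c, K = root a b + const ι c := by
  obtain ⟨b, hb⟩ := Finite.exists_min K
  have hK3 : ∀ i, K i = K b ∨ K i = K b + 1 ∨ K i = K b + 2 := fun i => by
    have := hb i; have := sub_le_two_of_Q_eq hK i b; omega
  have hcard := card_eq_card_add_card_add_card hK3
  have hQ := Q_eq_of_forall_eq_or hK3
  set p := #{i | K i = K b}
  set q := #{i | K i = K b + 1}
  set r := #{i | K i = K b + 2}
  have hp : 0 < p := card_pos.2 ⟨b, by simp⟩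
  have heq : p * q + q * r + 4 * p * r = 2 * (p + q + r) := by
    rw [hK, hcard] at hQ; exact_mod_cast hQ.symm
  rcases value_counts_cases hp heq with ⟨hp1, hr1⟩ | ⟨hr0, h89⟩
  · obtain ⟨b', hb'⟩ := card_eq_one.1 hp1
    obtain ⟨a, ha⟩ := card_eq_one.1 hr1
    have hmin : ∀ i, K i = K b ↔ i = b' := fun i => by simpa using Finset.ext_iff.1 hb' i
    have hmax : ∀ i, K i = K b + 2 ↔ i = a := fun i => by simpa using Finset.ext_iff.1 ha i
    have hab : a ≠ b' := fun h => by have := (hmin a).2 h; have := (hmax a).2 rfl; omega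
    refine ⟨a, b', hab, K b + 1, funext fun i => ?_⟩
    rcases hK3 i with h | h | h
    · obtain rfl := (hmin i).1 h
      simp [root, hab.symm, h]
    · have hia : i ≠ a := fun hia => by have := (hmax i).2 hia; omega
      have hib : i ≠ b' := fun hib => by have := (hmin i).2 hib; omega
      simp [root, hia, hib, h]
    · obtain rfl := (hmax i).1 h
      simp [root, hab, h]; ring
  · omega

end Roots

section Normalize

variable {N : ℕ}

/-- The representative of `K` modulo `ℤ (1, …, 1)` with last coordinate `0`, read in `ℤ^N`. -/
def normalize (K : Fin (N + 1) → ℤ) : Fin N → ℤ := Fin.init K - const (Fin N) (K (Fin.last N))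

@[simp]
theorem normalize_snoc_zero (k : Fin N → ℤ) : normalize (Fin.snoc k 0) = k := by
  simp [normalize]

@[simp]
theorem normalize_add_const (K : Fin (N + 1) → ℤ) (c : ℤ) :
    normalize (K + const _ c) = normalize K := by
  ext i; simp [normalize, Fin.init]

theorem snoc_normalize (K : Fin (N + 1) → ℤ) :
    Fin.snoc (normalize K) 0 = K + const _ (-K (Fin.last N)) := by
  ext i
  refine Fin.lastCases ?_ (fun j => ?_) i <;> simp [normalize, Fin.init, sub_eq_add_neg]

theorem sum_normalize (K : Fin (N + 1) → ℤ) :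
    ∑ i, normalize K i = ∑ i, K i - (N + 1) * K (Fin.last N) := by
  simp [normalize, Fin.init, Fin.sum_univ_castSucc, sum_sub_distrib]
  ring

theorem eq_of_normalize_eq {K K' : Fin (N + 1) → ℤ} (h : normalize K = normalize K')
    (hs : ∑ i, K i = ∑ i, K' i) : K = K' := by
  have hlast : K (Fin.last N) = K' (Fin.last N) := by
    have := sum_normalize K; rw [h, sum_normalize, hs] at this
    have hN : ((N : ℤ) + 1) ≠ 0 := by positivity
    exact mul_left_cancel₀ hN (by linarith)
  have hK := snoc_normalize K
  rw [h, snoc_normalize, hlast] at hK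
  exact (add_right_cancel hK).symm

theorem Q_snoc_zero (k : Fin N → ℤ) :
    Q (Fin.snoc k 0 : Fin (N + 1) → ℤ) = (N + 1) * ∑ i, k i ^ 2 - (∑ i, k i) ^ 2 := by
  simp [Q, Fin.sum_univ_castSucc]

end Normalize

def solutions (N : ℕ) : Set (Fin N → ℤ) := {k | Q (Fin.snoc k 0 : Fin (N + 1) → ℤ) = 2 * (N + 1)}

theorem mem_solutions_iff {N : ℕ} {k : Fin N → ℤ} :
    k ∈ solutions N ↔ Q (Fin.snoc k 0 : Fin (N + 1) → ℤ) = 2 * Fintype.card (Fin (N + 1)) := by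
  simp [solutions]

def normalizedRoots (N : ℕ) : Finset (Fin N → ℤ) :=
  univ.offDiag.image fun p : Fin (N + 1) × Fin (N + 1) => normalize (root p.1 p.2)

theorem card_normalizedRoots (N : ℕ) : #(normalizedRoots N) = (N + 1) * N := by
  rw [normalizedRoots, card_image_of_injOn, offDiag_card, card_univ, Fintype.card_fin,
    Nat.mul_succ, Nat.add_sub_cancel]
  rintro ⟨a, b⟩ hab ⟨a', b'⟩ - h
  have h' := eq_of_normalize_eq h (by rw [sum_root, sum_root])
  exact Prod.ext_iff.2 (root_inj (mem_offDiag.1 hab).2.2 h')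

theorem normalizedRoots_subset_solutions (N : ℕ) : ↑(normalizedRoots N) ⊆ solutions N := by
  simp only [normalizedRoots, coe_image, Set.image_subset_iff]
  rintro ⟨a, b⟩ hab
  rw [Set.mem_preimage, mem_solutions_iff, snoc_normalize]
  exact Q_root_add_const (mem_offDiag.1 hab).2.2 _

theorem solutions_subset_normalizedRoots {N : ℕ} (h8 : N + 1 ≠ 8) (h9 : N + 1 ≠ 9) :
    solutions N ⊆ normalizedRoots N := by
  intro k hk
  obtain ⟨a, b, hab, c, hK⟩ :=
    exists_eq_root_add_const (mem_solutions_iff.1 hk) (by simpa using h8) (by simpa using h9)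
  refine mem_image.2 ⟨(a, b), mem_offDiag.2 ⟨mem_univ _, mem_univ _, hab⟩, ?_⟩
  rw [← normalize_snoc_zero k, hK, normalize_add_const]

theorem solutions_finite (N : ℕ) : (solutions N).Finite := by
  refine (Set.finite_Icc (-2 : Fin N → ℤ) 2).subset fun k hk => ?_
  have h1 := sub_le_two_of_Q_eq (mem_solutions_iff.1 hk)
  refine ⟨fun i => ?_, fun i => ?_⟩
  · exact neg_le.1 (by simpa using h1 (Fin.last N) i.castSucc)
  · simpa using h1 i.castSucc (Fin.last N)

theorem ncard_solutions {N : ℕ} (h8 : N + 1 ≠ 8) (h9 : N + 1 ≠ 9) :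
    (solutions N).ncard = (N + 1) * N := by
  rw [← (normalizedRoots_subset_solutions N).antisymm (solutions_subset_normalizedRoots h8 h9),
    Set.ncard_coe_finset, card_normalizedRoots]

theorem lt_ncard_solutions {N : ℕ} {x : Fin N → ℤ} (hx : x ∈ solutions N)
    (hdvd : ¬((N : ℤ) + 1) ∣ ∑ i, x i) : (N + 1) * N < (solutions N).ncard := by
  have hx' : x ∉ normalizedRoots N := by
    simp only [normalizedRoots, mem_image, not_exists, not_and]
    rintro ⟨a, b⟩ - rfl
    rw [sum_normalize, sum_root] at hdvd
    exact hdvd ⟨-root a b (Fin.last N), by ring⟩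
  calc (N + 1) * N < #(insert x (normalizedRoots N)) := by
        rw [card_insert_of_notMem hx', card_normalizedRoots]; omega
    _ ≤ (solutions N).ncard := by
        rw [← Set.ncard_coe_finset, coe_insert]
        exact Set.ncard_le_ncard (Set.insert_subset hx (normalizedRoots_subset_solutions N))
          (solutions_finite N)

end CliffordTorus

/-- number of lattice points with `Q_n(k) = 2n`: exactly `n(n−1)` unless
`n = 8` or `n = 9`, in which case there are strictly more. -/
theorem stmt_8 :
    (∀ n : ℕ, 3 ≤ n → n ≠ 8 → n ≠ 9 →
      {k : Fin (n - 1) → ℤ |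
        (n : ℤ) * (∑ i, (k i) ^ 2) - (∑ i, k i) ^ 2 = 2 * (n : ℤ)}.ncard = n * (n - 1)) ∧
    ({k : Fin (8 - 1) → ℤ |
        (8 : ℤ) * (∑ i, (k i) ^ 2) - (∑ i, k i) ^ 2 = 2 * (8 : ℤ)}.ncard > 8 * (8 - 1)) ∧
    ({k : Fin (9 - 1) → ℤ |
        (9 : ℤ) * (∑ i, (k i) ^ 2) - (∑ i, k i) ^ 2 = 2 * (9 : ℤ)}.ncard > 9 * (9 - 1)) := by
  open CliffordTorus in
  refine ⟨fun n hn h8 h9 => ?_, ?_, ?_⟩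
  · obtain ⟨N, rfl⟩ : ∃ N, n = N + 1 := ⟨n - 1, by omega⟩
    simpa [solutions, Q_snoc_zero] using ncard_solutions h8 h9
  -- two-valued solutions, with value counts `(p, q) = (4, 4)` and `(3, 6)`
  · simpa [solutions, Q_snoc_zero] using lt_ncard_solutions (x := ![1, 1, 1, 1, 0, 0, 0])
      (by simp [solutions, Q_snoc_zero, Fin.sum_univ_succ]) (by simp [Fin.sum_univ_succ])
  · simpa [solutions, Q_snoc_zero] using lt_ncard_solutions (x := ![1, 1, 1, 1, 1, 1, 0, 0])
      (by simp [solutions, Q_snoc_zero, Fin.sum_univ_succ]) (by simp [Fin.sum_univ_succ])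
end

section
/- For every integer k ≥ 0 and every real t > 2/(2k+1)², the series Σ_{i=k+1}^{∞} (2i+1)·e^{−i(i+1)t} converges and satisfies Σ_{i=k+1}^{∞} (2i+1)·e^{−i(i+1)t} ≤ (1/t)·e^{−k(k+1)t}. -/
/-!
The summand is `f(i)` for `f(x) = (2x+1)e^{-x(x+1)t}`, whose antiderivative is `-e^{-x(x+1)t}/t`.
Since `f'(x) = e^{-x(x+1)t}(2 - (2x+1)²t)`, the hypothesis on `t` makes `f` antitone on `[k, ∞)`,
so by the integral test each partial sum of the tail is bounded by `∫_k^∞ f = e^{-k(k+1)t}/t`.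
-/

open Real Set

noncomputable def heatTraceTerm (t x : ℝ) : ℝ := (2 * x + 1) * exp (-(x * (x + 1)) * t)

lemma hasDerivAt_neg_mul_add_one_mul (t x : ℝ) :
    HasDerivAt (fun x : ℝ => -(x * (x + 1)) * t) (-(2 * x + 1) * t) x :=
  ((((hasDerivAt_id' x).mul ((hasDerivAt_id' x).add_const 1)).neg).mul_const t).congr_deriv
    (by ring)

lemma hasDerivAt_heatTraceTerm (t x : ℝ) :
    HasDerivAt (heatTraceTerm t)
      (exp (-(x * (x + 1)) * t) * (2 - (2 * x + 1) ^ 2 * t)) x :=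
  ((((hasDerivAt_id' x).const_mul 2).add_const 1).mul
    (hasDerivAt_neg_mul_add_one_mul t x).exp).congr_deriv (by ring)

lemma hasDerivAt_neg_exp_div {t : ℝ} (ht : t ≠ 0) (x : ℝ) :
    HasDerivAt (fun x : ℝ => -exp (-(x * (x + 1)) * t) / t) (heatTraceTerm t x) x := by
  refine (((hasDerivAt_neg_mul_add_one_mul t x).exp.neg).div_const t).congr_deriv ?_
  rw [heatTraceTerm]
  field_simp

lemma integral_heatTraceTerm {t : ℝ} (ht : t ≠ 0) (a b : ℝ) :
    ∫ x in a..b, heatTraceTerm t x = (exp (-(a * (a + 1)) * t) - exp (-(b * (b + 1)) * t)) / t := by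
  have hcont : Continuous (heatTraceTerm t) :=
    continuous_iff_continuousAt.2 fun x => (hasDerivAt_heatTraceTerm t x).continuousAt
  rw [intervalIntegral.integral_eq_sub_of_hasDerivAt (fun x _ => hasDerivAt_neg_exp_div ht x)
    (hcont.intervalIntegrable a b)]
  ring

lemma antitoneOn_heatTraceTerm {a t : ℝ} (ha : 0 ≤ 2 * a + 1) (hat : 2 ≤ (2 * a + 1) ^ 2 * t) :
    AntitoneOn (heatTraceTerm t) (Ici a) := by
  refine antitoneOn_of_deriv_nonpos (convex_Ici a)
    (fun x _ => (hasDerivAt_heatTraceTerm t x).continuousAt.continuousWithinAt)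
    (fun x _ => (hasDerivAt_heatTraceTerm t x).differentiableAt.differentiableWithinAt)
    fun x hx => ?_
  rw [interior_Ici, mem_Ioi] at hx
  rw [(hasDerivAt_heatTraceTerm t x).deriv]
  have hsq : (2 * a + 1) ^ 2 ≤ (2 * x + 1) ^ 2 := pow_le_pow_left₀ ha (by linarith) 2
  have ht : 0 ≤ t := by nlinarith
  exact mul_nonpos_of_nonneg_of_nonpos (exp_pos _).le (by nlinarith)

lemma sum_range_heatTraceTerm_le {a t : ℝ} (ha : 0 ≤ 2 * a + 1) (hat : 2 ≤ (2 * a + 1) ^ 2 * t)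
    (N : ℕ) : ∑ i ∈ Finset.range N, heatTraceTerm t (a + (i + 1 : ℕ)) ≤
      exp (-(a * (a + 1)) * t) / t := by
  have ht : 0 < t := by nlinarith
  calc ∑ i ∈ Finset.range N, heatTraceTerm t (a + (i + 1 : ℕ))
      ≤ ∫ x in a..a + N, heatTraceTerm t x :=
        ((antitoneOn_heatTraceTerm ha hat).mono Icc_subset_Ici_self).sum_le_integral
    _ = (exp (-(a * (a + 1)) * t) - exp (-((a + N) * (a + N + 1)) * t)) / t :=
        integral_heatTraceTerm ht.ne' a (a + N)
    _ ≤ exp (-(a * (a + 1)) * t) / t := by gcongr; exact sub_le_self _ (exp_pos _).le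

/-- tail bound for the trace of the heat kernel on `S²`:
for `t > 2/(2k+1)²`, `Σ_{i=k+1}^∞ (2i+1)e^{−i(i+1)t} ≤ (1/t)e^{−k(k+1)t}`. -/
theorem stmt_13 (k : ℕ) (t : ℝ) (ht : t > 2 / (2 * (k : ℝ) + 1) ^ 2) :
    Summable (fun i : ℕ =>
      (2 * ((k + 1 + i : ℕ) : ℝ) + 1) *
        Real.exp (-(((k + 1 + i : ℕ) : ℝ) * (((k + 1 + i : ℕ) : ℝ) + 1)) * t)) ∧
    (∑' i : ℕ,
      (2 * ((k + 1 + i : ℕ) : ℝ) + 1) *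
        Real.exp (-(((k + 1 + i : ℕ) : ℝ) * (((k + 1 + i : ℕ) : ℝ) + 1)) * t)) ≤
      (1 / t) * Real.exp (-((k : ℝ) * ((k : ℝ) + 1)) * t) := by
  have hk : (0 : ℝ) ≤ 2 * k + 1 := by positivity
  have hkt : 2 ≤ (2 * (k : ℝ) + 1) ^ 2 * t := by
    rw [gt_iff_lt, div_lt_iff₀ (by positivity)] at ht
    linarith
  have hcast : ∀ i : ℕ, ((k + 1 + i : ℕ) : ℝ) = k + (i + 1 : ℕ) := fun i => by push_cast; ring
  simp only [hcast, one_div_mul_eq_div]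
  have hsum := sum_range_heatTraceTerm_le hk hkt
  have hsummable := summable_of_sum_range_le (fun i => by rw [heatTraceTerm]; positivity) hsum
  exact ⟨hsummable, hsummable.tsum_le_of_sum_range_le hsum⟩
end

section
/- The series Σ_{i=0}^{∞} (2i+1)·exp(−4i(i+1)/25) converges, and its sum is strictly less than 18·exp(−24/25); in particular it is strictly less than 7. -/
open Real Finset

noncomputable def xx : ℝ := Real.exp (-(4/25))

lemma xx_pos : 0 < xx := Real.exp_pos _

lemma xx_lb : (0.852083 : ℝ) ≤ xx := by
  have h := Real.exp_bound (x := -(4/25)) (by rw [abs_of_nonpos] <;> norm_num) (n := 4) (by norm_num)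
  rw [abs_sub_le_iff] at h
  have h2 := h.2
  have hs : ∑ m ∈ range 4, (-(4/25 : ℝ)) ^ m / m.factorial = 1 - 4/25 + (4/25)^2/2 - (4/25)^3/6 := by
    simp [Finset.sum_range_succ, Nat.factorial]
    norm_num
  rw [hs] at h2
  have : |(-(4/25) : ℝ)| = 4/25 := by rw [abs_of_nonpos] <;> norm_num
  rw [this] at h2
  norm_num [Nat.factorial] at h2
  unfold xx
  nlinarith [h2]

lemma xx_ub : xx ≤ (0.852152 : ℝ) := by
  have h := Real.exp_bound (x := -(4/25)) (by rw [abs_of_nonpos] <;> norm_num) (n := 4) (by norm_num)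
  rw [abs_sub_le_iff] at h
  have h1 := h.1
  have hs : ∑ m ∈ range 4, (-(4/25 : ℝ)) ^ m / m.factorial = 1 - 4/25 + (4/25)^2/2 - (4/25)^3/6 := by
    simp [Finset.sum_range_succ, Nat.factorial]
    norm_num
  rw [hs] at h1
  have : |(-(4/25) : ℝ)| = 4/25 := by rw [abs_of_nonpos] <;> norm_num
  rw [this] at h1
  norm_num [Nat.factorial] at h1
  unfold xx
  nlinarith [h1]

lemma xx_le_one : xx ≤ 1 := xx_ub.trans (by norm_num)

lemma xx_pow (n : ℕ) : Real.exp ((n : ℝ) * (-(4/25))) = xx ^ n := Real.exp_nat_mul _ n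

/-- the heat-kernel trace on `S²` at `t = 4/25` is `< 18·e^{−24/25} < 7`. -/
theorem stmt_14 :
    Summable (fun i : ℕ =>
      (2 * (i : ℝ) + 1) * Real.exp (-(4 * (i : ℝ) * ((i : ℝ) + 1)) / 25)) ∧
    (∑' i : ℕ, (2 * (i : ℝ) + 1) * Real.exp (-(4 * (i : ℝ) * ((i : ℝ) + 1)) / 25)) <
      18 * Real.exp (-(24 / 25)) ∧
    (∑' i : ℕ, (2 * (i : ℝ) + 1) * Real.exp (-(4 * (i : ℝ) * ((i : ℝ) + 1)) / 25)) < 7 := by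
  set f : ℕ → ℝ := fun i => (2 * (i : ℝ) + 1) * Real.exp (-(4 * (i : ℝ) * ((i : ℝ) + 1)) / 25) with hf
  -- f i = (2i+1) * xx ^ (i*(i+1))
  have hfx : ∀ i : ℕ, f i = (2 * (i : ℝ) + 1) * xx ^ (i * (i + 1)) := by
    intro i
    rw [hf, ← xx_pow]
    push_cast
    ring_nf
  have hr0 : (0:ℝ) ≤ 13/11 * xx ^ 12 := by positivity
  have hr1 : 13/11 * xx ^ 12 < 1 := by
    have : xx ^ 12 ≤ (0.852152:ℝ) ^ 12 := pow_le_pow_left₀ xx_pos.le xx_ub 12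
    nlinarith
  set r : ℝ := 13/11 * xx ^ 12 with hrdef
  -- tail bound : f (i+5) ≤ 11 * xx^30 * r^i
  have htail : ∀ i : ℕ, f (i + 5) ≤ 11 * xx ^ 30 * r ^ i := by
    intro i
    rw [hfx]
    have h1 : xx ^ ((i+5) * (i+5+1)) ≤ xx ^ (30 + 12 * i) := by
      apply pow_le_pow_of_le_one xx_pos.le xx_le_one
      nlinarith [sq_nonneg i, Nat.zero_le i]
    have h2 : (2 * ((i:ℝ)+5) + 1) ≤ 11 * (13/11) ^ i := by
      have := one_add_mul_le_pow (a := (2/11 : ℝ)) (by norm_num) i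
      have h13 : ((1:ℝ) + 2/11) = 13/11 := by norm_num
      rw [h13] at this
      nlinarith
    have hx30 : (0:ℝ) ≤ xx ^ 30 := pow_nonneg xx_pos.le 30
    push_cast
    calc (2 * ((i:ℝ)+5) + 1) * xx ^ ((i+5) * (i+5+1))
        ≤ (2 * ((i:ℝ)+5) + 1) * xx ^ (30 + 12 * i) := by
          apply mul_le_mul_of_nonneg_left h1
          have : (0:ℝ) ≤ (i:ℝ) := Nat.cast_nonneg i
          nlinarith
      _ ≤ (11 * (13/11) ^ i) * xx ^ (30 + 12 * i) := by
          exact mul_le_mul_of_nonneg_right h2 (pow_nonneg xx_pos.le _)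
      _ = 11 * xx ^ 30 * r ^ i := by
          rw [hrdef, mul_pow, pow_add, pow_mul]
          ring
  have hgsum : Summable (fun i : ℕ => 11 * xx ^ 30 * r ^ i) :=
    (summable_geometric_of_lt_one hr0 hr1).mul_left _
  have hfnonneg : ∀ i : ℕ, 0 ≤ f i := by
    intro i
    rw [hfx]
    have : (0:ℝ) ≤ (i:ℝ) := Nat.cast_nonneg i
    have := pow_nonneg xx_pos.le (i * (i+1))
    nlinarith
  have htsummable : Summable (fun i : ℕ => f (i + 5)) :=
    Summable.of_nonneg_of_le (fun i => hfnonneg _) htail hgsum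
  have hsummable : Summable f := (summable_nat_add_iff 5).mp htsummable
  refine ⟨hsummable, ?_⟩
  -- tail sum bound
  have htsum_tail : (∑' i : ℕ, f (i + 5)) ≤ 11 * xx ^ 30 * (1 - r)⁻¹ := by
    calc (∑' i : ℕ, f (i + 5)) ≤ ∑' i : ℕ, 11 * xx ^ 30 * r ^ i :=
          Summable.tsum_le_tsum htail htsummable hgsum
      _ = 11 * xx ^ 30 * (1 - r)⁻¹ := by
          rw [tsum_mul_left, tsum_geometric_of_lt_one hr0 hr1]
  have hsplit := Summable.sum_add_tsum_nat_add 5 hsummable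
  have hsum5 : ∑ i ∈ range 5, f i = 1 + 3 * xx ^ 2 + 5 * xx ^ 6 + 7 * xx ^ 12 + 9 * xx ^ 20 := by
    simp [Finset.sum_range_succ, hfx]
    norm_num
  -- numeric bounds
  have hb : xx ≤ (0.852152:ℝ) := xx_ub
  have ha : (0.852083:ℝ) ≤ xx := xx_lb
  have p2 : xx ^ 2 ≤ (0.852152:ℝ) ^ 2 := pow_le_pow_left₀ xx_pos.le hb 2
  have p6 : xx ^ 6 ≤ (0.852152:ℝ) ^ 6 := pow_le_pow_left₀ xx_pos.le hb 6
  have p12 : xx ^ 12 ≤ (0.852152:ℝ) ^ 12 := pow_le_pow_left₀ xx_pos.le hb 12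
  have p20 : xx ^ 20 ≤ (0.852152:ℝ) ^ 20 := pow_le_pow_left₀ xx_pos.le hb 20
  have p30 : xx ^ 30 ≤ (0.852152:ℝ) ^ 30 := pow_le_pow_left₀ xx_pos.le hb 30
  have q6 : (0.852083:ℝ) ^ 6 ≤ xx ^ 6 := pow_le_pow_left₀ (by norm_num) ha 6
  have hrub : r ≤ 13/11 * (0.852152:ℝ) ^ 12 := by
    rw [hrdef]; nlinarith
  have hinv : (1 - r)⁻¹ ≤ (1 - 13/11 * (0.852152:ℝ) ^ 12)⁻¹ := by
    apply inv_anti₀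
    · nlinarith
    · nlinarith
  have htailnum : 11 * xx ^ 30 * (1 - r)⁻¹ ≤
      11 * (0.852152:ℝ) ^ 30 * (1 - 13/11 * (0.852152:ℝ) ^ 12)⁻¹ := by
    have h1 : (0:ℝ) < 1 - 13/11 * (0.852152:ℝ) ^ 12 := by norm_num
    have h2 : (0:ℝ) ≤ (1 - r)⁻¹ := by
      apply inv_nonneg.mpr; nlinarith
    apply mul_le_mul (by nlinarith) hinv h2 (by positivity)
  -- e^{-24/25} = xx^6
  have hx6 : Real.exp (-(24/25 : ℝ)) = xx ^ 6 := by
    rw [← xx_pow]; norm_num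
  have hmain : (∑' i : ℕ, f i) ≤ 1 + 3 * xx ^ 2 + 5 * xx ^ 6 + 7 * xx ^ 12 + 9 * xx ^ 20
      + 11 * xx ^ 30 * (1 - r)⁻¹ := by
    rw [← hsplit, hsum5]
    linarith [htsum_tail]
  have hnum : (1:ℝ) + 3 * (0.852152:ℝ) ^ 2 + 5 * (0.852152:ℝ) ^ 6 + 7 * (0.852152:ℝ) ^ 12
      + 9 * (0.852152:ℝ) ^ 20
      + 11 * (0.852152:ℝ) ^ 30 * (1 - 13/11 * (0.852152:ℝ) ^ 12)⁻¹
      < 18 * (0.852083:ℝ) ^ 6 := by norm_num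
  have hlt : (∑' i : ℕ, f i) < 18 * Real.exp (-(24/25 : ℝ)) := by
    rw [hx6]
    calc (∑' i : ℕ, f i)
        ≤ 1 + 3 * xx ^ 2 + 5 * xx ^ 6 + 7 * xx ^ 12 + 9 * xx ^ 20
          + 11 * xx ^ 30 * (1 - r)⁻¹ := hmain
      _ ≤ 1 + 3 * (0.852152:ℝ) ^ 2 + 5 * (0.852152:ℝ) ^ 6 + 7 * (0.852152:ℝ) ^ 12
          + 9 * (0.852152:ℝ) ^ 20
          + 11 * (0.852152:ℝ) ^ 30 * (1 - 13/11 * (0.852152:ℝ) ^ 12)⁻¹ := by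
            linarith [htailnum]
      _ < 18 * (0.852083:ℝ) ^ 6 := hnum
      _ ≤ 18 * xx ^ 6 := by linarith
  refine ⟨hlt, ?_⟩
  calc (∑' i : ℕ, f i) < 18 * Real.exp (-(24/25 : ℝ)) := hlt
    _ ≤ 18 * (0.852152:ℝ) ^ 6 := by rw [hx6]; linarith
    _ < 7 := by norm_num
end
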